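/- arXiv:2409.19767 — 3 statements merged into one kernel-verified Lean document; each statement's English description precedes it below -/
import Mathlib

section
/- The cone ω is the union of the four simplicial cones σ₁ = Cone(h₁,h₂,h₃,h₄), σ₂ = Cone(h₁,h₂,h₃,h₆), σ₃ = Cone(h₁,h₂,h₅,h₆), and σ₄ = Cone(h₁,h₂,h₄,h₅); that is, ω = σ₁ ∪ σ₂ ∪ σ₃ ∪ σ₄. -/
def h : Fin 6 → (Fin 4 → ℤ) :=
  ![![1,0,0,0], ![0,1,0,0], ![0,0,1,0], ![0,0,0,1],
    ![2,3,-2,-1], ![1,3,-1,-1]]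

def toR (v : Fin 4 → ℤ) : Fin 4 → ℝ := fun j => (v j : ℝ)

def cone {n : ℕ} (v : Fin n → (Fin 4 → ℝ)) : Set (Fin 4 → ℝ) :=
  {x | ∃ lam : Fin n → ℝ, (∀ i, 0 ≤ lam i) ∧ x = ∑ i, lam i • v i}

def ω : Set (Fin 4 → ℝ) := cone (fun i : Fin 6 => toR (h i))

@[simp] lemma vecHead_const {α : Type*} {n : ℕ} (a : α) :
    Matrix.vecHead (fun _ : Fin (n+1) => a) = a := rfl

@[simp] lemma vecTail_const {α : Type*} {n : ℕ} (a : α) :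
    Matrix.vecTail (fun _ : Fin (n+1) => a) = fun _ : Fin n => a := rfl

@[simp] lemma cons_val_five {α : Type*} (a b c d e f : α) :
    ![a, b, c, d, e, f] 5 = f := rfl

lemma t0 : toR (h 0) = ![1,0,0,0] := by
  funext j; fin_cases j <;> norm_num [toR, show h 0 = ![1,0,0,0] from rfl]
lemma t1 : toR (h 1) = ![0,1,0,0] := by
  funext j; fin_cases j <;> norm_num [toR, show h 1 = ![0,1,0,0] from rfl]
lemma t2 : toR (h 2) = ![0,0,1,0] := by
  funext j; fin_cases j <;> norm_num [toR, show h 2 = ![0,0,1,0] from rfl]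
lemma t3 : toR (h 3) = ![0,0,0,1] := by
  funext j; fin_cases j <;> norm_num [toR, show h 3 = ![0,0,0,1] from rfl]
lemma t4 : toR (h 4) = ![2,3,-2,-1] := by
  funext j; fin_cases j <;> norm_num [toR, show h 4 = ![2,3,-2,-1] from rfl]
lemma t5 : toR (h 5) = ![1,3,-1,-1] := by
  funext j; fin_cases j <;> norm_num [toR, show h 5 = ![1,3,-1,-1] from rfl]

lemma cone4_intro {v : Fin 4 → (Fin 4 → ℝ)} {x : Fin 4 → ℝ}
    (a b c d : ℝ) (ha : 0 ≤ a) (hb : 0 ≤ b) (hc : 0 ≤ c) (hd : 0 ≤ d)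
    (hx : ∀ j, x j = a * v 0 j + b * v 1 j + c * v 2 j + d * v 3 j) :
    x ∈ cone v := by
  refine ⟨![a,b,c,d], ?_, ?_⟩
  · intro i; fin_cases i <;> simpa
  · funext j
    rw [hx j]
    simp [Fin.sum_univ_four]

lemma omega_intro {x : Fin 4 → ℝ} (l : Fin 6 → ℝ) (hl : ∀ i, 0 ≤ l i)
    (hx : ∀ j, x j = ∑ i, l i * toR (h i) j) : x ∈ ω := by
  refine ⟨l, hl, ?_⟩
  funext j
  rw [hx j]
  simp

/-- `ω` is the union of the four simplicial cones
`σ₁ = Cone(h₁,h₂,h₃,h₄)`, `σ₂ = Cone(h₁,h₂,h₃,h₆)`,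
`σ₃ = Cone(h₁,h₂,h₅,h₆)`, `σ₄ = Cone(h₁,h₂,h₄,h₅)`. -/
theorem stmt_1 :
    ω = cone ![toR (h 0), toR (h 1), toR (h 2), toR (h 3)]
      ∪ cone ![toR (h 0), toR (h 1), toR (h 2), toR (h 5)]
      ∪ cone ![toR (h 0), toR (h 1), toR (h 4), toR (h 5)]
      ∪ cone ![toR (h 0), toR (h 1), toR (h 3), toR (h 4)] := by
  ext x
  constructor
  · rintro ⟨l, hl, rfl⟩
    have h0 := hl 0; have h1 := hl 1; have h2 := hl 2
    have h3 := hl 3; have h4 := hl 4; have h5 := hl 5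
    have key : ∀ j, (∑ i, l i • toR (h i)) j
        = ![l 0 + 2*l 4 + l 5, l 1 + 3*l 4 + 3*l 5,
            l 2 - 2*l 4 - l 5, l 3 - l 4 - l 5] j := by
      intro j
      fin_cases j <;>
        simp [Fin.sum_univ_six, t0, t1, t2, t3, t4, t5] <;> ring
    rcases le_or_gt 0 (l 3 - l 4 - l 5) with hv | hv
    · rcases le_or_gt 0 (l 2 - 2*l 4 - l 5) with hu | hu
      · -- σ₁
        left; left; left
        refine cone4_intro (l 0 + 2*l 4 + l 5) (l 1 + 3*l 4 + 3*l 5)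
          (l 2 - 2*l 4 - l 5) (l 3 - l 4 - l 5)
          (by linarith) (by linarith) hu hv ?_
        intro j
        rw [key j]
        fin_cases j <;> simp [t0, t1, t2, t3, t4, t5] <;> ring
      · -- u < 0 ≤ v : σ₄
        right
        refine cone4_intro (l 0 + l 2) (l 1 + (3/2)*l 2 + (3/2)*l 5)
          (l 3 - l 2/2 - l 5/2) (l 4 + l 5/2 - l 2/2)
          (by linarith) (by linarith) (by linarith) (by linarith) ?_
        intro j
        rw [key j]
        fin_cases j <;> simp [t0, t1, t2, t3, t4, t5] <;> ring
    · rcases le_or_gt (l 3 - l 4 - l 5) (l 2 - 2*l 4 - l 5) with huv | huv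
      · -- v < 0, v ≤ u : σ₂
        left; left; right
        refine cone4_intro (l 0 + l 3 + l 4) (l 1 + 3*l 3)
          (l 2 - l 3 - l 4) (l 4 + l 5 - l 3)
          (by linarith) (by linarith) (by linarith) (by linarith) ?_
        intro j
        rw [key j]
        fin_cases j <;> simp [t0, t1, t2, t3, t4, t5] <;> ring
      · rcases le_or_gt (2*(l 3 - l 4 - l 5)) (l 2 - 2*l 4 - l 5) with h2v | h2v
        · -- 2v ≤ u ≤ v : σ₃
          left; right
          refine cone4_intro (l 0 + l 2) (l 1 + 3*l 3)
            (l 3 + l 4 - l 2) (l 2 - 2*l 3 + l 5)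
            (by linarith) (by linarith) (by linarith) (by linarith) ?_
          intro j
          rw [key j]
          fin_cases j <;> simp [t0, t1, t2, t3, t4, t5] <;> ring
        · -- u < 2v, u < v < 0 : σ₄
          right
          refine cone4_intro (l 0 + l 2) (l 1 + (3/2)*l 2 + (3/2)*l 5)
            (l 3 - l 2/2 - l 5/2) (l 4 + l 5/2 - l 2/2)
            (by linarith) (by linarith) (by linarith) (by linarith) ?_
          intro j
          rw [key j]
          fin_cases j <;> simp [t0, t1, t2, t3, t4, t5] <;> ring
  · rintro (((⟨l, hl, rfl⟩ | ⟨l, hl, rfl⟩) | ⟨l, hl, rfl⟩) | ⟨l, hl, rfl⟩)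
    · refine omega_intro ![l 0, l 1, l 2, l 3, 0, 0]
        (fun i => by fin_cases i <;> simp [hl 0, hl 1, hl 2, hl 3]) ?_
      intro j
      fin_cases j <;> simp [Fin.sum_univ_six, Fin.sum_univ_four, t0, t1, t2, t3, t4, t5] <;> ring
    · refine omega_intro ![l 0, l 1, l 2, 0, 0, l 3]
        (fun i => by fin_cases i <;> simp [hl 0, hl 1, hl 2, hl 3]) ?_
      intro j
      fin_cases j <;> simp [Fin.sum_univ_six, Fin.sum_univ_four, t0, t1, t2, t3, t4, t5] <;> ring
    · refine omega_intro ![l 0, l 1, 0, 0, l 2, l 3]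
        (fun i => by fin_cases i <;> simp [hl 0, hl 1, hl 2, hl 3]) ?_
      intro j
      fin_cases j <;> simp [Fin.sum_univ_six, Fin.sum_univ_four, t0, t1, t2, t3, t4, t5] <;> ring
    · refine omega_intro ![l 0, l 1, 0, l 2, l 3, 0]
        (fun i => by fin_cases i <;> simp [hl 0, hl 1, hl 2, hl 3]) ?_
      intro j
      fin_cases j <;> simp [Fin.sum_univ_six, Fin.sum_univ_four, t0, t1, t2, t3, t4, t5] <;> ring
end

section
/- Let A = (f₁, f₂, f₄, f₉). Then det(f₁ f₂ f₄ f₉) ≡ 2 (mod 3); the set 𝒢_A is well defined, the additive subsemigroup S_A of ℤ⁴ generated by 𝒢_A is pointed (S_A ∩ (−S_A) = {0}), and the convex cone in ℝ⁴ generated by 𝒢_A equals the convex cone generated by the five vectors (0,0,0,1), (0,1,0,0), (0,2,3,0), (1,0,0,−1), (1,1,3,0). -/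
/-- The nine lattice points `f₁, …, f₉` (0-indexed as `f 0, …, f 8`). -/
def f : Fin 9 → (Fin 4 → ℤ) :=
  ![![1,0,0,0], ![0,1,0,0], ![1,2,3,0], ![0,0,0,1], ![0,3,3,1],
    ![0,2,2,1], ![1,1,1,0], ![1,2,2,0], ![0,1,1,1]]

/-- The Hilbert basis `ℋ = {f₁, …, f₉}`. -/
def Hset : Set (Fin 4 → ℤ) := Set.range f

/-- The ordered tuple `A = (f₁, f₂, f₄, f₉)`. -/
def A : Fin 4 → (Fin 4 → ℤ) := ![f 0, f 1, f 3, f 8]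

/-- The 4×4 integer matrix whose columns are the members of a family of four vectors. -/
def colMat (c : Fin 4 → (Fin 4 → ℤ)) : Matrix (Fin 4) (Fin 4) ℤ :=
  Matrix.of fun i j => c j i

/-- The set `𝒢_A = ℋ ∪ {g − aⱼ : g ∈ ℋ∖A, det of (A with column aⱼ replaced by g) ≢ 0 mod 3}`. -/
def GA : Set (Fin 4 → ℤ) :=
  Hset ∪ {x | ∃ g ∈ Hset, (∀ j, g ≠ A j) ∧
    ∃ j : Fin 4, x = g - A j ∧ (((colMat (Function.update A j g)).det : ZMod 3) ≠ 0)}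

/-- The subsemigroup `S_A` of `ℤ⁴` generated by `𝒢_A`. -/
def SA : AddSubmonoid (Fin 4 → ℤ) := AddSubmonoid.closure GA

/-- The convex cone in `ℝ⁴` generated by a set of integer vectors. -/
def coneOf (T : Set (Fin 4 → ℤ)) : Set (Fin 4 → ℝ) :=
  {x | ∃ s : Finset (Fin 4 → ℤ), ↑s ⊆ T ∧ ∃ c : (Fin 4 → ℤ) → ℝ,
    (∀ v, 0 ≤ c v) ∧ x = ∑ v ∈ s, c v • toR v}


/-!
Explicitly, `𝒢_A` consists of seventeen vectors. The functional `2x₁ + x₂ + x₃ + x₄` is positive on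
each of them, hence on every nonzero element of `S_A`, which makes `S_A` pointed. Apart from
`(1,1,3,0)` they all satisfy `x₁ ≥ 0`, `x₃ ≥ 0`, `2x₃ ≤ 3x₂`, `x₁ + x₄ ≥ 0`, the facet inequalities
of the simplicial cone spanned by the other four generators; conversely the five generators lie in
`𝒢_A`, as `f₄`, `f₂`, `f₃ - f₁`, `f₇ - f₉` and `f₃ - f₂`.
-/

theorem AddSubmonoid.eq_zero_or_pos_of_mem_closure {M N : Type*} [AddCommMonoid M]
    [AddCommMonoid N] [PartialOrder N] [IsOrderedCancelAddMonoid N] {S : Set M} (φ : M →+ N)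
    (hφ : ∀ s ∈ S, 0 < φ s) {x : M} (hx : x ∈ closure S) : x = 0 ∨ 0 < φ x := by
  induction hx using closure_induction with
  | mem s hs => exact Or.inr (hφ s hs)
  | zero => exact Or.inl rfl
  | add x y _ _ ihx ihy =>
    rcases ihx with rfl | hx
    · simpa using ihy
    rcases ihy with rfl | hy
    · simpa using Or.inr hx
    exact Or.inr (by simpa using add_pos hx hy)

theorem AddSubmonoid.eq_zero_of_mem_closure_of_neg_mem {M N : Type*} [AddCommGroup M]
    [AddCommGroup N] [PartialOrder N] [IsOrderedAddMonoid N] {S : Set M} (φ : M →+ N)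
    (hφ : ∀ s ∈ S, 0 < φ s) {x : M} (hx : x ∈ closure S) (hnx : -x ∈ closure S) : x = 0 := by
  rcases eq_zero_or_pos_of_mem_closure φ hφ hx with h | hpos
  · exact h
  rcases eq_zero_or_pos_of_mem_closure φ hφ hnx with h | hneg
  · exact neg_eq_zero.mp h
  rw [map_neg, Left.neg_pos_iff] at hneg
  exact (lt_asymm hpos hneg).elim

section Cone

variable {T T₁ T₂ : Set (Fin 4 → ℤ)}

theorem zero_mem_coneOf : (0 : Fin 4 → ℝ) ∈ coneOf T :=
  ⟨∅, by simp, 0, fun _ => le_rfl, by simp⟩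

theorem toR_mem_coneOf {v : Fin 4 → ℤ} (hv : v ∈ T) :
    toR v ∈ coneOf T :=
  ⟨{v}, by simpa using hv, 1, fun _ => zero_le_one, by simp⟩

theorem smul_mem_coneOf {x : Fin 4 → ℝ} {r : ℝ} (hr : 0 ≤ r)
    (hx : x ∈ coneOf T) : r • x ∈ coneOf T := by
  obtain ⟨s, hs, c, hc, rfl⟩ := hx
  refine ⟨s, hs, r • c, fun v => mul_nonneg hr (hc v), ?_⟩
  simp only [Finset.smul_sum, Pi.smul_apply, smul_eq_mul, mul_smul]

theorem add_mem_coneOf {x y : Fin 4 → ℝ}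
    (hx : x ∈ coneOf T) (hy : y ∈ coneOf T) : x + y ∈ coneOf T := by
  obtain ⟨s, hs, c, hc, rfl⟩ := hx
  obtain ⟨t, ht, d, hd, rfl⟩ := hy
  refine ⟨s ∪ t, by simpa using ⟨hs, ht⟩, (s : Set _).indicator c + (t : Set _).indicator d,
    fun v => add_nonneg (Set.indicator_nonneg (fun v _ => hc v) v)
      (Set.indicator_nonneg (fun v _ => hd v) v), ?_⟩
  simp only [Pi.add_apply, add_smul, Finset.sum_add_distrib, ← Set.indicator_smul_apply_left,
    Finset.sum_indicator_subset _ Finset.subset_union_left,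
    Finset.sum_indicator_subset _ Finset.subset_union_right]

theorem coneOf_mono (h : T₁ ⊆ T₂) : coneOf T₁ ⊆ coneOf T₂ :=
  fun _ ⟨s, hs, c, hc, hx⟩ => ⟨s, hs.trans h, c, hc, hx⟩

theorem coneOf_subset (h : ∀ v ∈ T₁, toR v ∈ coneOf T₂) :
    coneOf T₁ ⊆ coneOf T₂ := by
  rintro x ⟨s, hs, c, hc, rfl⟩
  exact Finset.sum_induction _ (· ∈ coneOf T₂) (fun _ _ => add_mem_coneOf)
    zero_mem_coneOf (fun v hv => smul_mem_coneOf (hc v) (h v (hs hv)))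

end Cone

def coneGens : Set (Fin 4 → ℤ) :=
  {![0,0,0,1], ![0,1,0,0], ![0,2,3,0], ![1,0,0,-1], ![1,1,3,0]}

theorem toR_mem_coneOf_coneGens {v : Fin 4 → ℤ} (h₀ : 0 ≤ v 0) (h₂ : 0 ≤ v 2)
    (h₁₂ : 2 * v 2 ≤ 3 * v 1) (h₀₃ : 0 ≤ v 0 + v 3) : toR v ∈ coneOf coneGens := by
  have hcomb : toR v = (v 0 + v 3 : ℝ) • toR ![0,0,0,1] + (v 1 - 2 * v 2 / 3 : ℝ) • toR ![0,1,0,0]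
      + (v 2 / 3 : ℝ) • toR ![0,2,3,0] + (v 0 : ℝ) • toR ![1,0,0,-1] := by
    funext k
    fin_cases k <;> simp [toR]
    ring
  have h₁₂' : (2 * v 2 : ℝ) ≤ 3 * v 1 := by exact_mod_cast h₁₂
  rw [hcomb]
  refine add_mem_coneOf (add_mem_coneOf (add_mem_coneOf ?_ ?_) ?_) ?_ <;>
    refine smul_mem_coneOf ?_ (toR_mem_coneOf (by simp [coneGens]))
  · exact_mod_cast h₀₃
  · linarith
  · exact div_nonneg (by exact_mod_cast h₂) zero_le_three
  · exact_mod_cast h₀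

def GAFinset : Finset (Fin 4 → ℤ) :=
  {![0,0,0,1], ![0,1,0,0], ![0,1,1,0], ![0,1,1,1], ![0,2,2,0], ![0,2,2,1], ![0,2,3,0],
    ![0,3,3,0], ![0,3,3,1], ![1,0,0,-1], ![1,0,0,0], ![1,1,1,-1], ![1,1,1,0], ![1,1,3,0],
    ![1,2,2,-1], ![1,2,2,0], ![1,2,3,0]}

theorem GA_subset_GAFinset : GA ⊆ GAFinset := by
  rintro v (⟨i, rfl⟩ | ⟨g, ⟨i, rfl⟩, hne, j, rfl, hdet⟩)
  · revert i
    decide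
  · revert i j hne hdet
    decide

def grading : (Fin 4 → ℤ) →+ ℤ :=
  AddMonoidHom.mk' (fun v => 2 * v 0 + v 1 + v 2 + v 3) fun v w => by
    simp only [Pi.add_apply]
    ring

theorem grading_pos_of_mem_GA {v : Fin 4 → ℤ} (hv : v ∈ GA) : 0 < grading v := by
  have hpos : ∀ v ∈ GAFinset, 0 < grading v := by decide
  exact hpos v (GA_subset_GAFinset hv)

theorem toR_mem_coneOf_coneGens_of_mem_GA {v : Fin 4 → ℤ} (hv : v ∈ GA) :
    toR v ∈ coneOf coneGens := by
  have hcases : ∀ v ∈ GAFinset, v = ![1,1,3,0] ∨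
      (0 ≤ v 0 ∧ 0 ≤ v 2 ∧ 2 * v 2 ≤ 3 * v 1 ∧ 0 ≤ v 0 + v 3) := by
    decide
  rcases hcases v (GA_subset_GAFinset hv) with rfl | ⟨h₀, h₂, h₁₂, h₀₃⟩
  · exact toR_mem_coneOf (by simp [coneGens])
  · exact toR_mem_coneOf_coneGens h₀ h₂ h₁₂ h₀₃

theorem coneGens_subset_GA : coneGens ⊆ GA := by
  rintro v (rfl | rfl | rfl | rfl | rfl)
  · exact Or.inl ⟨3, by decide⟩
  · exact Or.inl ⟨1, by decide⟩
  · exact Or.inr ⟨f 2, ⟨2, rfl⟩, by decide, 0, by decide, by decide⟩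
  · exact Or.inr ⟨f 6, ⟨6, rfl⟩, by decide, 3, by decide, by decide⟩
  · exact Or.inr ⟨f 2, ⟨2, rfl⟩, by decide, 1, by decide, by decide⟩

/-- `det(f₁ f₂ f₄ f₉) ≡ 2 (mod 3)`, the semigroup `S_A` generated by `𝒢_A` is pointed,
and the cone generated by `𝒢_A` equals the cone generated by
`(0,0,0,1), (0,1,0,0), (0,2,3,0), (1,0,0,−1), (1,1,3,0)`. -/
theorem stmt_15 :
    ((colMat A).det : ZMod 3) = 2 ∧
    {x : Fin 4 → ℤ | x ∈ SA ∧ -x ∈ SA} = {0} ∧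
    coneOf GA = coneOf {![0,0,0,1], ![0,1,0,0], ![0,2,3,0], ![1,0,0,-1], ![1,1,3,0]} := by
  refine ⟨by decide, ?_, ?_⟩
  · refine Set.eq_singleton_iff_unique_mem.mpr ⟨⟨SA.zero_mem, by simp [SA.zero_mem]⟩, ?_⟩
    exact fun x ⟨hx, hnx⟩ => AddSubmonoid.eq_zero_of_mem_closure_of_neg_mem grading
      (fun _ => grading_pos_of_mem_GA) hx hnx
  · exact (coneOf_subset fun _ => toR_mem_coneOf_coneGens_of_mem_GA).antisymm
      (coneOf_mono coneGens_subset_GA)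
end

section
/- The linear map U₃: ℤ⁴ → ℤ⁴ given by the matrix with rows (1, 1, −1, 0), (0, 0, 0, 1), (3, 0, −1, 3), (0, −1, 1, 0) is unimodular (its determinant has absolute value 1), and its ℝ-linear extension maps the cone ω₃ generated by (1,0,0,0), (0,1,0,0), (1,2,3,0), (0,0,0,1), (0,3,3,1) onto the cone generated by (0,0,0,1), (0,1,0,0), (0,1,3,0), (1,0,0,−1), (1,0,3,0); equivalently, U₃(ω₃ ∩ ℤ⁴) equals the intersection of the latter cone with ℤ⁴. -/
/-- The cone `ω₃` generated by `(1,0,0,0), (0,1,0,0), (1,2,3,0), (0,0,0,1), (0,3,3,1)`. -/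
def ω₃ : Set (Fin 4 → ℝ) :=
  cone ![toR ![1,0,0,0], toR ![0,1,0,0], toR ![1,2,3,0], toR ![0,0,0,1], toR ![0,3,3,1]]

/-- The cone generated by `(0,0,0,1), (0,1,0,0), (0,1,3,0), (1,0,0,−1), (1,0,3,0)`. -/
def ω₃'' : Set (Fin 4 → ℝ) :=
  cone ![toR ![0,0,0,1], toR ![0,1,0,0], toR ![0,1,3,0], toR ![1,0,0,-1], toR ![1,0,3,0]]

/-- The matrix `U₃` (acting on column vectors). -/
def U₃ : Matrix (Fin 4) (Fin 4) ℤ :=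
  !![1, 1, -1, 0;
     0, 0, 0, 1;
     3, 0, -1, 3;
     0, -1, 1, 0]

/-!
`U₃` permutes the generators of `ω₃` onto those of `ω₃''`, and a linear map sends the cone
spanned by a family onto the cone spanned by its image. Since `U₃` is unimodular, `U₃⁻¹` is
integral, so every lattice point of `ω₃''` is the image of a lattice point of `ω₃`.
-/

open Matrix

lemma image_cone {n : ℕ} (f : (Fin 4 → ℝ) →ₗ[ℝ] (Fin 4 → ℝ)) (v : Fin n → Fin 4 → ℝ) :
    f '' cone v = cone (f ∘ v) := by
  ext y
  constructor
  · rintro ⟨_, ⟨c, hc, rfl⟩, rfl⟩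
    exact ⟨c, hc, by simp⟩
  · rintro ⟨c, hc, rfl⟩
    exact ⟨_, ⟨c, hc, rfl⟩, by simp⟩

lemma cone_comp_perm_subset {n : ℕ} (w : Fin n → Fin 4 → ℝ) (σ : Equiv.Perm (Fin n)) :
    cone (w ∘ σ) ⊆ cone w := by
  rintro _ ⟨c, hc, rfl⟩
  refine ⟨c ∘ σ.symm, fun j => hc _, ?_⟩
  simpa using Equiv.sum_comp σ (fun j => c (σ.symm j) • w j)

lemma cone_comp_perm {n : ℕ} (w : Fin n → Fin 4 → ℝ) (σ : Equiv.Perm (Fin n)) :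
    cone (w ∘ σ) = cone w := by
  refine (cone_comp_perm_subset w σ).antisymm ?_
  simpa [Function.comp_assoc] using cone_comp_perm_subset (w ∘ σ) σ.symm

lemma toR_mulVec (M : Matrix (Fin 4) (Fin 4) ℤ) (v : Fin 4 → ℤ) :
    toR (M *ᵥ v) = M.map (Int.cast : ℤ → ℝ) *ᵥ toR v := by
  funext j
  simp [toR, mulVec, dotProduct]

lemma mulVec_map_intCast_injective {M : Matrix (Fin 4) (Fin 4) ℤ} (hM : IsUnit M.det) :
    Function.Injective (M.map (Int.cast : ℤ → ℝ) *ᵥ ·) := by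
  refine mulVec_injective_iff_isUnit.mpr ((isUnit_iff_isUnit_det _).mpr ?_)
  have h := hM.map (Int.castRingHom ℝ)
  rwa [RingHom.map_det] at h

lemma image_lattice_points_of_isUnit_det {M : Matrix (Fin 4) (Fin 4) ℤ} (hM : IsUnit M.det)
    {S T : Set (Fin 4 → ℝ)} (hST : (fun x => M.map (Int.cast : ℤ → ℝ) *ᵥ x) '' S = T) :
    (fun v => M *ᵥ v) '' {v | toR v ∈ S} = {v | toR v ∈ T} := by
  have hMM : M * M⁻¹ = 1 := mul_nonsing_inv M hM
  ext v
  constructor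
  · rintro ⟨w, hw, rfl⟩
    rw [Set.mem_ofPred_eq, toR_mulVec, ← hST]
    exact ⟨_, hw, rfl⟩
  · intro hv
    rw [Set.mem_ofPred_eq, ← hST] at hv
    obtain ⟨x, hx, hxv⟩ := hv
    refine ⟨M⁻¹ *ᵥ v, ?_, by simp [mulVec_mulVec, hMM]⟩
    have hx' : toR (M⁻¹ *ᵥ v) = x :=
      mulVec_map_intCast_injective hM <| by
        simp only [← toR_mulVec, mulVec_mulVec, hMM, one_mulVec, hxv]
    rwa [Set.mem_ofPred_eq, hx']

lemma abs_det_U₃ : |U₃.det| = 1 := by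
  decide

lemma image_ω₃ : (fun x => U₃.map (Int.cast : ℤ → ℝ) *ᵥ x) '' ω₃ = ω₃'' := by
  refine (image_cone (U₃.map (Int.cast : ℤ → ℝ)).mulVecLin _).trans
    (Eq.trans ?_ (cone_comp_perm _ (Equiv.ofBijective ![4, 3, 0, 2, 1] (by decide))))
  -- `U₃` sends the `i`-th generator of `ω₃` to generator `![4, 3, 0, 2, 1] i` of `ω₃''`.
  congr 1
  funext i j
  fin_cases i <;> fin_cases j <;>
    simp [U₃, toR, mulVec, dotProduct, Fin.sum_univ_succ] <;> norm_num

/-- `U₃` is unimodular, its real extension maps `ω₃` onto the cone generated by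
`(0,0,0,1), (0,1,0,0), (0,1,3,0), (1,0,0,−1), (1,0,3,0)`; equivalently,
`U₃(ω₃ ∩ ℤ⁴)` is the intersection of the latter cone with `ℤ⁴`. -/
theorem stmt_18 :
    |U₃.det| = 1 ∧
    (fun x => (U₃.map (Int.cast : ℤ → ℝ)).mulVec x) '' ω₃ = ω₃'' ∧
    (fun v => U₃.mulVec v) '' {v : Fin 4 → ℤ | toR v ∈ ω₃} = {v : Fin 4 → ℤ | toR v ∈ ω₃''} :=
  ⟨abs_det_U₃, image_ω₃,
    image_lattice_points_of_isUnit_det (Int.isUnit_iff_abs_eq.mpr abs_det_U₃) image_ω₃⟩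
end
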